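/- arXiv:1312.5518 — 4 statements merged into one kernel-verified Lean document; each statement's English description precedes it below -/
import Mathlib

section
/- If a semigroup S is a disjoint union of m copies of the free monogenic semigroup and also a disjoint union of n copies of the free monogenic semigroup, then m = n. -/
/-!
Each `aᵢ` lies in some `⟨bⱼ⟩`. Two elements `bᵖ, b^q` of one monogenic semigroup share the
power `b^(pq)`, so by disjointness of the `⟨aᵢ⟩` distinct `aᵢ` lie in distinct `⟨bⱼ⟩`. This gives
an injection `Fin m → Fin n`, and by symmetry `m = n`.
-/

/-- `pw a n` is `a ^ n` for `n ≥ 1` (with junk value `a` at `n = 0`),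
defined in any magma. -/
def pw {S : Type*} [Mul S] (a : S) : ℕ → S
  | 0 => a
  | 1 => a
  | n + 2 => pw a (n + 1) * a

/-- The monogenic subsemigroup `⟨a⟩ = {a^n : n ≥ 1}`. -/
def genSet {S : Type*} [Mul S] (a : S) : Set S := {x | ∃ n, 1 ≤ n ∧ pw a n = x}

/-- `a` has infinite order: its positive powers are pairwise distinct,
i.e. `⟨a⟩` is free monogenic. -/
def InfOrder {S : Type*} [Mul S] (a : S) : Prop :=
  ∀ m n : ℕ, 1 ≤ m → 1 ≤ n → pw a m = pw a n → m = n

/-- `S` is a disjoint union of `k` copies of the free monogenic semigroup. -/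
def IsDisjointUnionOfFreeMonogenic (S : Type*) [Semigroup S] (k : ℕ) : Prop :=
  ∃ a : Fin k → S,
    (∀ i, InfOrder (a i)) ∧
    (∀ i j, i ≠ j → genSet (a i) ∩ genSet (a j) = ∅) ∧
    (⋃ i, genSet (a i)) = Set.univ

section pw

variable {S : Type*}

lemma pw_succ [Mul S] (a : S) {n : ℕ} (hn : 1 ≤ n) : pw a (n + 1) = pw a n * a := by
  obtain ⟨k, rfl⟩ := Nat.exists_eq_add_of_le' hn
  rfl

variable [Semigroup S]

lemma pw_add (a : S) {p q : ℕ} (hp : 1 ≤ p) (hq : 1 ≤ q) :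
    pw a (p + q) = pw a p * pw a q := by
  induction q, hq using Nat.le_induction with
  | base => exact pw_succ a hp
  | succ q hq ih => rw [← add_assoc, pw_succ a (by omega), ih, pw_succ a hq, mul_assoc]

lemma pw_pw (a : S) {p q : ℕ} (hp : 1 ≤ p) (hq : 1 ≤ q) :
    pw (pw a p) q = pw a (p * q) := by
  induction q, hq using Nat.le_induction with
  | base => rw [mul_one]; rfl
  | succ q hq ih =>
    rw [pw_succ _ hq, ih, Nat.mul_succ, pw_add a (Nat.mul_pos hp hq) hp]

end pw

section genSet

variable {S : Type*} [Semigroup S]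

lemma genSet_inter_genSet_nonempty {b x y : S} (hx : x ∈ genSet b) (hy : y ∈ genSet b) :
    (genSet x ∩ genSet y).Nonempty := by
  obtain ⟨p, hp, rfl⟩ := hx
  obtain ⟨q, hq, rfl⟩ := hy
  exact ⟨pw b (p * q), ⟨q, hq, pw_pw b hp hq⟩, ⟨p, hp, by rw [pw_pw b hq hp, mul_comm]⟩⟩

lemma card_le_of_genSet_disjoint_of_iUnion_genSet_eq_univ {ι κ : Type*} [Fintype ι]
    [Fintype κ] {a : ι → S} {b : κ → S}
    (ha : ∀ i j, i ≠ j → genSet (a i) ∩ genSet (a j) = ∅)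
    (hb : ⋃ j, genSet (b j) = Set.univ) :
    Fintype.card ι ≤ Fintype.card κ := by
  have hcover : ∀ i, ∃ j, a i ∈ genSet (b j) :=
    fun i => Set.mem_iUnion.mp (hb ▸ Set.mem_univ (a i))
  choose f hf using hcover
  refine Fintype.card_le_of_injective f fun i i' hii' => ?_
  by_contra hne
  have hmeet := genSet_inter_genSet_nonempty (hf i) (hii' ▸ hf i')
  rw [ha i i' hne] at hmeet
  exact Set.not_nonempty_empty hmeet

end genSet

/-- A semigroup cannot be a disjoint union of `m` and of `n` copies of
the free monogenic semigroup for `m ≠ n`. -/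
theorem stmt_1 {S : Type*} [Semigroup S] {m n : ℕ}
    (hm : IsDisjointUnionOfFreeMonogenic S m)
    (hn : IsDisjointUnionOfFreeMonogenic S n) :
    m = n := by
  obtain ⟨a, -, ha, hau⟩ := hm
  obtain ⟨b, -, hb, hbu⟩ := hn
  have hmn := card_le_of_genSet_disjoint_of_iUnion_genSet_eq_univ ha hbu
  have hnm := card_le_of_genSet_disjoint_of_iUnion_genSet_eq_univ hb hau
  simp only [Fintype.card_fin] at hmn hnm
  omega
end

section
/- Let S and T be semigroups each of which is a disjoint union of m copies of the free monogenic semigroup, with generators a₁,…,a_m of the copies in S and b₁,…,b_m of the copies in T. Then every surjective homomorphism φ : S → T with φ(aᵢ) = bᵢ for all i is an isomorphism. -/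
lemma map_pw {S T : Type*} [Mul S] [Mul T] (f : S →ₙ* T) (a : S) :
    ∀ n, f (pw a n) = pw (f a) n
  | 0 => rfl
  | 1 => rfl
  | n + 2 => by simp only [pw, map_mul, map_pw f a (n + 1)]

lemma eq_and_eq_of_pw_eq_pw {T ι : Type*} [Mul T] {b : ι → T}
    (hbFree : ∀ i, InfOrder (b i)) (hbDisj : ∀ i j, i ≠ j → genSet (b i) ∩ genSet (b j) = ∅)
    {i j : ι} {n k : ℕ} (hn : 1 ≤ n) (hk : 1 ≤ k) (h : pw (b i) n = pw (b j) k) :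
    i = j ∧ n = k := by
  obtain rfl : i = j := by
    by_contra hij
    exact (hbDisj i j hij).subset ⟨⟨n, hn, rfl⟩, ⟨k, hk, h.symm⟩⟩
  exact ⟨rfl, hbFree i n k hn hk h⟩

/-- Every element of `S` is some `a i ^ n`, and its image `b i ^ n` determines both `i` and `n`
because the `⟨b i⟩` are free and pairwise disjoint. -/
lemma injective_of_map_generators {S T ι : Type*} [Mul S] [Mul T] {a : ι → S} {b : ι → T}
    (haCover : (⋃ i, genSet (a i)) = Set.univ) (hbFree : ∀ i, InfOrder (b i))
    (hbDisj : ∀ i j, i ≠ j → genSet (b i) ∩ genSet (b j) = ∅)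
    (φ : S →ₙ* T) (hφ : ∀ i, φ (a i) = b i) : Function.Injective φ := by
  intro x y hxy
  obtain ⟨_, ⟨i, rfl⟩, n, hn, rfl⟩ : x ∈ ⋃ i, genSet (a i) := haCover ▸ Set.mem_univ x
  obtain ⟨_, ⟨j, rfl⟩, k, hk, rfl⟩ : y ∈ ⋃ i, genSet (a i) := haCover ▸ Set.mem_univ y
  rw [map_pw, map_pw, hφ, hφ] at hxy
  obtain ⟨rfl, rfl⟩ := eq_and_eq_of_pw_eq_pw hbFree hbDisj hn hk hxy
  rfl

theorem stmt_3_general {S T : Type*} [Semigroup S] [Semigroup T] {m : ℕ}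
    (a : Fin m → S) (b : Fin m → T)
    (haCover : (⋃ i, genSet (a i)) = Set.univ)
    (hbFree : ∀ i, InfOrder (b i))
    (hbDisj : ∀ i j, i ≠ j → genSet (b i) ∩ genSet (b j) = ∅)
    (φ : S →ₙ* T) (hsurj : Function.Surjective φ) (hφ : ∀ i, φ (a i) = b i) :
    Function.Bijective φ :=
  ⟨injective_of_map_generators haCover hbFree hbDisj φ hφ, hsurj⟩

/-- If `S` and `T` are both disjoint unions of `m` copies of the free monogenic
semigroup, with copy generators `a i` and `b i` respectively, then every
surjective homomorphism `φ : S → T` with `φ (a i) = b i` is an isomorphism. -/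
theorem stmt_3 {S T : Type*} [Semigroup S] [Semigroup T] {m : ℕ}
    (a : Fin m → S) (b : Fin m → T)
    (haFree : ∀ i, InfOrder (a i))
    (haDisj : ∀ i j, i ≠ j → genSet (a i) ∩ genSet (a j) = ∅)
    (haCover : (⋃ i, genSet (a i)) = Set.univ)
    (hbFree : ∀ i, InfOrder (b i))
    (hbDisj : ∀ i j, i ≠ j → genSet (b i) ∩ genSet (b j) = ∅)
    (hbCover : (⋃ i, genSet (b i)) = Set.univ)
    (φ : S →ₙ* T) (hsurj : Function.Surjective φ) (hφ : ∀ i, φ (a i) = b i) :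
    Function.Bijective φ :=
  stmt_3_general a b haCover hbFree hbDisj φ hsurj hφ
end

section
/- Let S be a semigroup that is the disjoint union of free monogenic subsemigroups ⟨a⟩, ⟨b⟩, ⟨c⟩, and suppose ab = ba = a^i, ac = ca = a^j, bc = a^k, cb = a^l for positive integers i, j, k, l. Then k = l and i + j = k + 2. -/
/-!
Computing `bcb` as `(bc)b` and as `b(cb)` gives `a^(k-1+i) = a^(i+l-1)`, and computing `abca`
as `(ab)(ca)` and as `a(bc)a` gives `a^(i+j) = a^(k+2)`; since `a` has infinite order, comparing
exponents yields both equations.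
-/

@[simp]
lemma pw_one {S : Type*} [Mul S] (a : S) : pw a 1 = a := rfl

lemma pw_succ_of_one_le {S : Type*} [Mul S] (a : S) {n : ℕ} (hn : 1 ≤ n) :
    pw a (n + 1) = pw a n * a := by
  obtain ⟨n, rfl⟩ := Nat.exists_eq_add_of_le' hn
  rfl

lemma pw_add_s12 {S : Type*} [Semigroup S] (a : S) {m n : ℕ} (hm : 1 ≤ m) (hn : 1 ≤ n) :
    pw a (m + n) = pw a m * pw a n := by
  induction n, hn using Nat.le_induction with
  | base => exact pw_succ_of_one_le a hm
  | succ n hn ih =>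
    rw [← add_assoc, pw_succ_of_one_le a (by omega), ih, mul_assoc,
      ← pw_succ_of_one_le a hn]

lemma pw_succ_mul_of_mul_eq {S : Type*} [Semigroup S] {a b : S} {i : ℕ} (hi : 1 ≤ i)
    (h : a * b = pw a i) (n : ℕ) : pw a (n + 1) * b = pw a (n + i) := by
  cases n with
  | zero => simpa using h
  | succ n =>
    rw [pw_succ_of_one_le a (by omega), mul_assoc, h, pw_add_s12 a (by omega) hi]

lemma mul_pw_succ_of_mul_eq {S : Type*} [Semigroup S] {a b : S} {i : ℕ} (hi : 1 ≤ i)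
    (h : b * a = pw a i) (n : ℕ) : b * pw a (n + 1) = pw a (i + n) := by
  cases n with
  | zero => simpa using h
  | succ n =>
    rw [add_comm (n + 1), pw_add_s12 a le_rfl (by omega), pw_one, ← mul_assoc, h,
      pw_add_s12 a hi (by omega)]

theorem stmt_12_general {S : Type*} [Semigroup S] (a b c : S)
    (ha : InfOrder a)
    (i j k l : ℕ) (hi : 1 ≤ i) (hj : 1 ≤ j) (hk : 1 ≤ k) (hl : 1 ≤ l)
    (h1 : a * b = pw a i) (h2 : b * a = pw a i)
    (h4 : c * a = pw a j)
    (h5 : b * c = pw a k) (h6 : c * b = pw a l) :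
    k = l ∧ i + j = k + 2 := by
  obtain ⟨k, rfl⟩ := Nat.exists_eq_add_of_le' hk
  obtain ⟨l, rfl⟩ := Nat.exists_eq_add_of_le' hl
  have hbcb : pw a (k + i) = pw a (i + l) := by
    rw [← pw_succ_mul_of_mul_eq hi h1, ← mul_pw_succ_of_mul_eq hi h2, ← h5, ← h6, mul_assoc]
  have habca : pw a (i + j) = pw a (1 + (k + 1) + 1) :=
    calc pw a (i + j) = (a * b) * (c * a) := by rw [h1, h4, pw_add_s12 a hi hj]
      _ = pw a 1 * (b * c) * pw a 1 := by simp only [pw_one, mul_assoc]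
      _ = pw a (1 + (k + 1) + 1) := by
        rw [h5, pw_add_s12 a (m := 1 + (k + 1)) (by omega) le_rfl, pw_add_s12 a le_rfl hk]
  have hkl : k + i = i + l := ha _ _ (by omega) (by omega) hbcb
  have hijk : i + j = 1 + (k + 1) + 1 := ha _ _ (by omega) (by omega) habca
  omega

theorem stmt_12 {S : Type*} [Semigroup S] (a b c : S)
    (ha : InfOrder a) (hb : InfOrder b) (hc : InfOrder c)
    (hab : genSet a ∩ genSet b = ∅) (hac : genSet a ∩ genSet c = ∅)
    (hbc : genSet b ∩ genSet c = ∅)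
    (hcover : genSet a ∪ genSet b ∪ genSet c = Set.univ)
    (i j k l : ℕ) (hi : 1 ≤ i) (hj : 1 ≤ j) (hk : 1 ≤ k) (hl : 1 ≤ l)
    (h1 : a * b = pw a i) (h2 : b * a = pw a i)
    (h3 : a * c = pw a j) (h4 : c * a = pw a j)
    (h5 : b * c = pw a k) (h6 : c * b = pw a l) :
    k = l ∧ i + j = k + 2 :=
  stmt_12_general a b c ha i j k l hi hj hk hl h1 h2 h4 h5 h6
end

section
/- Let S be a semigroup that is the disjoint union of free monogenic subsemigroups ⟨a⟩, ⟨b⟩, ⟨c⟩, and suppose ab = ba = a^i, ac = ca = a^j, bc = cb = b^k for positive integers i, j, k. Then i + j = ik − k + 2. -/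
/-
Multiplying out `a b c a` in two ways: as `(a b)(c a) = a^i a^j` it is `a^(i+j)`; as `a (b c) a = a b^k a`
it is `a^(k(i-1)+2)`, since each factor `b` absorbed by a power of `a` raises the exponent by `i - 1`.
As `a` has infinite order, the exponents agree.
-/

section Powers

variable {S : Type*}

lemma pw_mul_pw [Semigroup S] (a : S) {m : ℕ} (hm : 1 ≤ m) :
    ∀ n, 1 ≤ n → pw a m * pw a n = pw a (m + n)
  | 1, _ => (pw_succ a hm).symm
  | n + 2, _ => by
    rw [pw_succ a (n := n + 1) (by omega), ← mul_assoc, pw_mul_pw a hm (n + 1) (by omega),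
      ← pw_succ a (by omega)]
    rfl

variable [Semigroup S] {a b : S} {i : ℕ}

lemma pw_mul_of_mul_eq_pw (hi : 1 ≤ i) (hab : a * b = pw a i) :
    ∀ n, 1 ≤ n → pw a n * b = pw a (n + (i - 1))
  | 1, _ => by
    rw [show 1 + (i - 1) = i by omega]
    exact hab
  | n + 2, _ => by
    rw [pw_succ a (n := n + 1) (by omega), mul_assoc, hab, pw_mul_pw a (by omega) i hi]
    congr 1
    omega

lemma mul_pw_of_mul_eq_pw (hi : 1 ≤ i) (hab : a * b = pw a i) :
    ∀ m, 1 ≤ m → a * pw b m = pw a (m * (i - 1) + 1)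
  | 1, _ => by
    rw [show 1 * (i - 1) + 1 = i by omega]
    exact hab
  | m + 2, _ => by
    rw [pw_succ b (n := m + 1) (by omega), ← mul_assoc, mul_pw_of_mul_eq_pw hi hab (m + 1) (by omega),
      pw_mul_of_mul_eq_pw hi hab _ (by omega)]
    congr 1
    ring

end Powers

theorem stmt_13_general {S : Type*} [Semigroup S] (a b c : S)
    (ha : InfOrder a)
    (i j k : ℕ) (hi : 1 ≤ i) (hj : 1 ≤ j) (hk : 1 ≤ k)
    (h1 : a * b = pw a i)
    (h4 : c * a = pw a j)
    (h5 : b * c = pw b k) :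
    i + j = i * k - k + 2 := by
  have key : pw a (i + j) = pw a (k * (i - 1) + 2) :=
    calc pw a (i + j) = (a * b) * (c * a) := by rw [h1, h4, pw_mul_pw a hi j hj]
      _ = a * (b * c) * a := by simp only [mul_assoc]
      _ = pw a (k * (i - 1) + 2) := by
        rw [h5, mul_pw_of_mul_eq_pw hi h1 k hk, ← pw_succ a (by omega)]
  rw [ha _ _ (by omega) (by omega) key, ← Nat.sub_one_mul, mul_comm]

theorem stmt_13 {S : Type*} [Semigroup S] (a b c : S)
    (ha : InfOrder a) (hb : InfOrder b) (hc : InfOrder c)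
    (hab : genSet a ∩ genSet b = ∅) (hac : genSet a ∩ genSet c = ∅)
    (hbc : genSet b ∩ genSet c = ∅)
    (hcover : genSet a ∪ genSet b ∪ genSet c = Set.univ)
    (i j k : ℕ) (hi : 1 ≤ i) (hj : 1 ≤ j) (hk : 1 ≤ k)
    (h1 : a * b = pw a i) (h2 : b * a = pw a i)
    (h3 : a * c = pw a j) (h4 : c * a = pw a j)
    (h5 : b * c = pw b k) (h6 : c * b = pw b k) :
    i + j = i * k - k + 2 :=
  stmt_13_general a b c ha i j k hi hj hk h1 h4 h5
end
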